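/- arXiv:1304.5975 — 4 statements merged into one kernel-verified Lean document; each statement's English description precedes it below -/
import Mathlib

section
/- Let f be differentiable on an interval containing [u,v], u < v, f' integrable, and |f'|^r convex on [u,v] with p, r > 1, 1/p + 1/r = 1. Then |(1/6)[f(u) + f(v) + 4 f((u+v)/2)] - (1/(v-u)) ∫ᵤᵛ f(x) dx| ≤ ((v-u)/4^(1+1/r)) ((1+2^(p+1))/(3^(p+1)(p+1)))^(1/p) · [(3|f'(u)|^r + |f'(v)|^r)^(1/r) + (|f'(u)|^r + 3|f'(v)|^r)^(1/r)]. -/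
/-!
Integrating by parts against the kernel `x - (5u+v)/6` on `[u, m]` and `x - (u+5v)/6` on
`[m, v]`, `m = (u+v)/2`, writes the Simpson error as `(v-u)⁻¹` times the sum of the two integrals
of kernel times `f'`. On each half, Hölder's inequality separates the kernel, whose `L^p` norm is
explicit, from `f'`; and convexity of `|f'|^r` bounds its integral over a half by the integral of
the chord, `(v-u)/8 * (3|f'(u)|^r + |f'(v)|^r)` on the left half and symmetrically on the right.
-/

open MeasureTheory intervalIntegral Set

theorem abs_intervalIntegral_mul_le_Lp_mul_Lq {p q a b : ℝ} {F G : ℝ → ℝ}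
    (hpq : p.HolderConjugate q) (hab : a ≤ b)
    (hF : IntervalIntegrable F volume a b) (hG : IntervalIntegrable G volume a b)
    (hFp : IntervalIntegrable (fun x => |F x| ^ p) volume a b)
    (hGq : IntervalIntegrable (fun x => |G x| ^ q) volume a b) :
    |∫ x in a..b, F x * G x|
      ≤ (∫ x in a..b, |F x| ^ p) ^ (1 / p) * (∫ x in a..b, |G x| ^ q) ^ (1 / q) := by
  rw [intervalIntegrable_iff_integrableOn_Ioc_of_le hab] at hF hG hFp hGq
  simp only [integral_of_le hab]
  have memLp {H : ℝ → ℝ} {s : ℝ} (hs : 0 < s) (hH : IntegrableOn H (Ioc a b))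
      (hHs : IntegrableOn (fun x => |H x| ^ s) (Ioc a b)) :
      MemLp H (ENNReal.ofReal s) (volume.restrict (Ioc a b)) :=
    (integrable_norm_rpow_iff hH.1 (by simpa using hs) ENNReal.ofReal_ne_top).1
      (by simpa [ENNReal.toReal_ofReal hs.le] using hHs.integrable)
  calc |∫ x in Ioc a b, F x * G x| ≤ ∫ x in Ioc a b, |F x| * |G x| := by
        simpa only [abs_mul] using
          (MeasureTheory.abs_integral_le_integral_abs (f := fun x => F x * G x))
    _ ≤ _ := integral_mul_norm_le_Lp_mul_Lq hpq (memLp hpq.pos hF hFp) (memLp hpq.symm.pos hG hGq)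

theorem integral_abs_sub_rpow {q a b c : ℝ} (hq : 0 ≤ q) (hac : a ≤ c) (hcb : c ≤ b) :
    ∫ x in a..b, |x - c| ^ q = ((c - a) ^ (q + 1) + (b - c) ^ (q + 1)) / (q + 1) := by
  have hcont : Continuous fun x : ℝ => |x - c| ^ q := by fun_prop (disch := exact Or.inr hq)
  have hq1 : q + 1 ≠ 0 := by linarith
  rw [← integral_add_adjacent_intervals (hcont.intervalIntegrable a c)
    (hcont.intervalIntegrable c b), add_div]
  congr 1
  · rw [integral_congr (g := fun x => (c - x) ^ q) fun x hx => by
      rw [uIcc_of_le hac] at hx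
      simp only [abs_of_nonpos (sub_nonpos.2 hx.2), neg_sub]]
    simp [integral_comp_sub_left (fun y => y ^ q) c, integral_rpow (Or.inl (by linarith : -1 < q)),
      Real.zero_rpow hq1]
  · rw [integral_congr (g := fun x => (x - c) ^ q) fun x hx => by
      rw [uIcc_of_le hcb] at hx
      simp only [abs_of_nonneg (sub_nonneg.2 hx.1)]]
    simp [integral_comp_sub_right (fun y => y ^ q) c, integral_rpow (Or.inl (by linarith : -1 < q)),
      Real.zero_rpow hq1]

theorem integral_sub_mul_deriv {f f' : ℝ → ℝ} {a b c : ℝ}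
    (hd : ∀ x ∈ uIcc a b, HasDerivAt f (f' x) x) (hint : IntervalIntegrable f' volume a b) :
    ∫ x in a..b, (x - c) * f' x = (b - c) * f b - (a - c) * f a - ∫ x in a..b, f x := by
  simpa using integral_mul_deriv_eq_deriv_mul (fun x _ => (hasDerivAt_id x).sub_const c) hd
    intervalIntegrable_const hint

theorem ConvexOn.le_chord {g : ℝ → ℝ} {a b x : ℝ} (hg : ConvexOn ℝ (Icc a b) g) (hab : a < b)
    (hx : x ∈ Icc a b) :
    g x ≤ ((b - x) * g a + (x - a) * g b) / (b - a) := by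
  have hba : 0 < b - a := sub_pos.2 hab
  have hcomb : (b - x) / (b - a) * a + (x - a) / (b - a) * b = x := by field_simp; ring
  have := hg.2 (left_mem_Icc.2 hab.le) (right_mem_Icc.2 hab.le)
    (div_nonneg (sub_nonneg.2 hx.2) hba.le) (div_nonneg (sub_nonneg.2 hx.1) hba.le)
    (by field_simp; ring)
  simp only [smul_eq_mul, hcomb] at this
  exact this.trans_eq (by ring)

theorem ConvexOn.integral_le_chord {g : ℝ → ℝ} {a b s t : ℝ} (hg : ConvexOn ℝ (Icc a b) g)
    (hab : a < b) (has : a ≤ s) (hst : s ≤ t) (htb : t ≤ b)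
    (hgi : IntervalIntegrable g volume s t) :
    ∫ x in s..t, g x
      ≤ (t - s) * (((b - (s + t) / 2) * g a + ((s + t) / 2 - a) * g b) / (b - a)) := by
  have hchord : Continuous fun x => ((b - x) * g a + (x - a) * g b) / (b - a) := by fun_prop
  refine (integral_mono_on hst hgi (hchord.intervalIntegrable s t)
    fun x hx => hg.le_chord hab ⟨has.trans hx.1, hx.2.trans htb⟩).trans_eq ?_
  have haffine : ∀ x, ((b - x) * g a + (x - a) * g b) / (b - a)
      = (b * g a - a * g b) / (b - a) + x * ((g b - g a) / (b - a)) := fun x => by ring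
  simp only [haffine]
  rw [intervalIntegral.integral_add intervalIntegrable_const
    ((by fun_prop : Continuous fun x : ℝ => x * ((g b - g a) / (b - a))).intervalIntegrable _ _)]
  simp
  ring

theorem ConvexOn.intervalIntegrable_of_nonneg {g : ℝ → ℝ} {a b : ℝ} (hg : ConvexOn ℝ (Icc a b) g)
    (hab : a ≤ b) (hg0 : ∀ x ∈ Icc a b, 0 ≤ g x)
    (hm : AEStronglyMeasurable g (volume.restrict (Ioc a b))) :
    IntervalIntegrable g volume a b := by
  rw [intervalIntegrable_iff_integrableOn_Ioc_of_le hab]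
  refine Integrable.mono' (integrableOn_const measure_Ioc_lt_top.ne (C := max (g a) (g b))) hm
    ((ae_restrict_iff' measurableSet_Ioc).2 (.of_forall fun x hx => ?_))
  rw [Real.norm_of_nonneg (hg0 x (Ioc_subset_Icc_self hx))]
  exact hg.le_max_of_mem_Icc (left_mem_Icc.2 hab) (right_mem_Icc.2 hab) (Ioc_subset_Icc_self hx)

theorem abs_integral_sub_mul_le {p r s t c : ℝ} {g : ℝ → ℝ} (hpr : p.HolderConjugate r)
    (hsc : s ≤ c) (hct : c ≤ t) (hg : IntervalIntegrable g volume s t)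
    (hgr : IntervalIntegrable (fun x => |g x| ^ r) volume s t) :
    |∫ x in s..t, (x - c) * g x|
      ≤ (((c - s) ^ (p + 1) + (t - c) ^ (p + 1)) / (p + 1)) ^ (1 / p)
          * (∫ x in s..t, |g x| ^ r) ^ (1 / r) := by
  have hp := hpr.nonneg
  have hkernel : Continuous fun x : ℝ => |x - c| ^ p := by fun_prop (disch := exact Or.inr hp)
  rw [← integral_abs_sub_rpow hp hsc hct]
  exact abs_intervalIntegral_mul_le_Lp_mul_Lq hpr (hsc.trans hct)
    ((by fun_prop : Continuous fun x : ℝ => x - c).intervalIntegrable _ _) hg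
    (hkernel.intervalIntegrable _ _) hgr

theorem abs_integral_sub_mul_le_chord {p r a b s c t : ℝ} {g : ℝ → ℝ}
    (hpr : p.HolderConjugate r) (hconv : ConvexOn ℝ (Icc a b) fun x => |g x| ^ r) (hab : a < b)
    (has : a ≤ s) (hsc : s ≤ c) (hct : c ≤ t) (htb : t ≤ b) (hg : IntervalIntegrable g volume a b)
    (hgr : IntervalIntegrable (fun x => |g x| ^ r) volume a b) :
    |∫ x in s..t, (x - c) * g x|
      ≤ (((c - s) ^ (p + 1) + (t - c) ^ (p + 1)) / (p + 1)) ^ (1 / p)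
          * ((t - s) * (((b - (s + t) / 2) * |g a| ^ r + ((s + t) / 2 - a) * |g b| ^ r)
              / (b - a))) ^ (1 / r) := by
  have hkernel : 0 ≤ ((c - s) ^ (p + 1) + (t - c) ^ (p + 1)) / (p + 1) :=
    div_nonneg (add_nonneg (Real.rpow_nonneg (sub_nonneg.2 hsc) _)
      (Real.rpow_nonneg (sub_nonneg.2 hct) _)) (by linarith [hpr.pos])
  have hst := hsc.trans hct
  have hsub : uIcc s t ⊆ uIcc a b :=
    uIcc_subset_uIcc (mem_uIcc_of_le has (hst.trans htb)) (mem_uIcc_of_le (has.trans hst) htb)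
  refine (abs_integral_sub_mul_le hpr hsc hct (hg.mono_set hsub) (hgr.mono_set hsub)).trans <|
    mul_le_mul_of_nonneg_left (Real.rpow_le_rpow (integral_nonneg hst fun x _ => by positivity)
      (hconv.integral_le_chord hab has hst htb (hgr.mono_set hsub))
      (one_div_nonneg.2 hpr.symm.nonneg))
    (Real.rpow_nonneg hkernel _)

theorem simpson_sub_average_eq {f f' : ℝ → ℝ} {u v : ℝ} (huv : u < v)
    (hd : ∀ x ∈ Icc u v, HasDerivAt f (f' x) x) (hint : IntervalIntegrable f' volume u v) :
    (1 / 6) * (f u + f v + 4 * f ((u + v) / 2)) - (1 / (v - u)) * ∫ x in u..v, f x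
      = ((∫ x in u..(u + v) / 2, (x - (5 * u + v) / 6) * f' x)
          + ∫ x in (u + v) / 2..v, (x - (u + 5 * v) / 6) * f' x) / (v - u) := by
  have hIcc : uIcc u v = Icc u v := uIcc_of_le huv.le
  have hu : u ∈ Icc u v := left_mem_Icc.2 huv.le
  have hv : v ∈ Icc u v := right_mem_Icc.2 huv.le
  have hm : (u + v) / 2 ∈ Icc u v := ⟨by linarith, by linarith⟩
  have hfi : IntervalIntegrable f volume u v :=
    (HasDerivAt.continuousOn hd).intervalIntegrable_of_Icc huv.le
  rw [integral_sub_mul_deriv (fun x hx => hd x (uIcc_subset_Icc hu hm hx))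
      (hint.mono_set (hIcc ▸ uIcc_subset_Icc hu hm)),
    integral_sub_mul_deriv (fun x hx => hd x (uIcc_subset_Icc hm hv hx))
      (hint.mono_set (hIcc ▸ uIcc_subset_Icc hm hv)),
    ← integral_add_adjacent_intervals (hfi.mono_set (hIcc ▸ uIcc_subset_Icc hu hm))
      (hfi.mono_set (hIcc ▸ uIcc_subset_Icc hm hv))]
  have : v - u ≠ 0 := sub_ne_zero.2 huv.ne'
  field_simp
  ring

theorem simpson_holder_const_eq {p r h S : ℝ} (hpr : p.HolderConjugate r) (hh : 0 < h)
    (hS : 0 ≤ S) :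
    (((h / 6) ^ (p + 1) + (h / 3) ^ (p + 1)) / (p + 1)) ^ (1 / p) * (h / 8 * S) ^ (1 / r)
      = h * (h / 4 ^ (1 + 1 / r) * ((1 + 2 ^ (p + 1)) / (3 ^ (p + 1) * (p + 1))) ^ (1 / p)
          * S ^ (1 / r)) := by
  have hp := hpr.pos
  have hh2 : 0 ≤ h / 2 := by positivity
  have hK : ((h / 6) ^ (p + 1) + (h / 3) ^ (p + 1)) / (p + 1)
      = (h / 2) ^ (p + 1) * ((1 + 2 ^ (p + 1)) / (3 ^ (p + 1) * (p + 1))) := by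
    rw [show h / 6 = h / 2 / 3 by ring, show h / 3 = h / 2 * 2 / 3 by ring,
      Real.div_rpow (x := h / 2) hh2 (by norm_num),
      Real.div_rpow (x := h / 2 * 2) (by positivity) (by norm_num),
      Real.mul_rpow (x := h / 2) hh2 (by norm_num)]
    field_simp
  have hexp : (p + 1) * (1 / p) + 1 / r = 2 := by
    have := hpr.inv_add_inv_eq_one
    field_simp at this ⊢
    linarith
  have hsplit : (h / 2) ^ ((p + 1) * (1 / p)) * (h / 2) ^ (1 / r) = (h / 2) ^ 2 := by
    rw [← Real.rpow_add (by positivity), hexp]; norm_num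
  rw [hK, Real.mul_rpow (by positivity) (by positivity), ← Real.rpow_mul hh2,
    Real.mul_rpow (by positivity) hS, show h / 8 = h / 2 / 4 by ring,
    Real.div_rpow hh2 (by norm_num), Real.rpow_add (x := 4) (by norm_num), Real.rpow_one]
  calc _ = (h / 2) ^ ((p + 1) * (1 / p)) * (h / 2) ^ (1 / r)
        * ((1 + 2 ^ (p + 1)) / (3 ^ (p + 1) * (p + 1))) ^ (1 / p) * S ^ (1 / r) / 4 ^ (1 / r) := by
        ring
    _ = _ := by rw [hsplit]; field_simp; ring

theorem stmt_7_general (f f' : ℝ → ℝ) (u v p r : ℝ) (huv : u < v)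
    (hp : 1 < p) (hpr : 1 / p + 1 / r = 1)
    (hd : ∀ x ∈ Set.Icc u v, HasDerivAt f (f' x) x)
    (hint : IntervalIntegrable f' volume u v)
    (hc : ConvexOn ℝ (Set.Icc u v) (fun x => |f' x| ^ r)) :
    |(1 / 6) * (f u + f v + 4 * f ((u + v) / 2))
        - (1 / (v - u)) * ∫ x in u..v, f x|
      ≤ ((v - u) / 4 ^ (1 + 1 / r)) *
          ((1 + 2 ^ (p + 1)) / (3 ^ (p + 1) * (p + 1))) ^ (1 / p) *
          ((3 * |f' u| ^ r + |f' v| ^ r) ^ (1 / r)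
            + (|f' u| ^ r + 3 * |f' v| ^ r) ^ (1 / r)) := by
  have hpq : p.HolderConjugate r :=
    Real.holderConjugate_iff.2 ⟨hp, by simpa only [one_div] using hpr⟩
  have hh : 0 < v - u := sub_pos.2 huv
  have hgi : IntervalIntegrable (fun x => |f' x| ^ r) volume u v :=
    hc.intervalIntegrable_of_nonneg huv.le (fun x _ => by positivity)
      (hint.1.1.norm.aemeasurable.pow_const r).aestronglyMeasurable
  have hleft : |∫ x in u..(u + v) / 2, (x - (5 * u + v) / 6) * f' x|
      ≤ ((((v - u) / 6) ^ (p + 1) + ((v - u) / 3) ^ (p + 1)) / (p + 1)) ^ (1 / p)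
          * ((v - u) / 8 * (3 * |f' u| ^ r + |f' v| ^ r)) ^ (1 / r) := by
    convert abs_integral_sub_mul_le_chord (s := u) (c := (5 * u + v) / 6) (t := (u + v) / 2)
      hpq hc huv le_rfl (by linarith) (by linarith) (by linarith) hint hgi using 3
    · congr 3 <;> ring
    · field_simp; ring
  have hright : |∫ x in (u + v) / 2..v, (x - (u + 5 * v) / 6) * f' x|
      ≤ ((((v - u) / 6) ^ (p + 1) + ((v - u) / 3) ^ (p + 1)) / (p + 1)) ^ (1 / p)
          * ((v - u) / 8 * (|f' u| ^ r + 3 * |f' v| ^ r)) ^ (1 / r) := by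
    convert abs_integral_sub_mul_le_chord (s := (u + v) / 2) (c := (u + 5 * v) / 6) (t := v)
      hpq hc huv (by linarith) (by linarith) (by linarith) le_rfl hint hgi using 3
    · rw [add_comm]; congr 3 <;> ring
    · field_simp; ring
  rw [simpson_sub_average_eq huv hd hint, abs_div, abs_of_pos hh, div_le_iff₀ hh]
  calc _ ≤ _ := abs_add_le _ _
    _ ≤ _ := add_le_add hleft hright
    _ = _ := by rw [simpson_holder_const_eq hpq hh (by positivity),
      simpson_holder_const_eq hpq hh (by positivity)]; ring

theorem stmt_7 (f f' : ℝ → ℝ) (u v p r : ℝ) (huv : u < v)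
    (hp : 1 < p) (hr : 1 < r) (hpr : 1 / p + 1 / r = 1)
    (hd : ∀ x ∈ Set.Icc u v, HasDerivAt f (f' x) x)
    (hint : IntervalIntegrable f' volume u v)
    (hc : ConvexOn ℝ (Set.Icc u v) (fun x => |f' x| ^ r)) :
    |(1 / 6) * (f u + f v + 4 * f ((u + v) / 2))
        - (1 / (v - u)) * ∫ x in u..v, f x|
      ≤ ((v - u) / 4 ^ (1 + 1 / r)) *
          ((1 + 2 ^ (p + 1)) / (3 ^ (p + 1) * (p + 1))) ^ (1 / p) *
          ((3 * |f' u| ^ r + |f' v| ^ r) ^ (1 / r)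
            + (|f' u| ^ r + 3 * |f' v| ^ r) ^ (1 / r)) :=
  stmt_7_general f f' u v p r huv hp hpr hd hint hc
end

section
/- Let f be differentiable on an interval containing [u,v] with 0 ≤ u < v, f' integrable, |f'|^r s-convex in the second sense on [u,v] for s ∈ (0,1], p, r > 1 with 1/p + 1/r = 1, and suppose (f(u)+f(v))/2 = f((u+v)/2). Then |(f(u)+f(v))/2 - (1/(v-u)) ∫ᵤᵛ f(x) dx| ≤ ((v-u)/(8(p+1)^(1/p))) · [(((2^(s+1)-1)/(2^s(s+1))) |f'(u)|^r + (1/(2^s(s+1))) |f'(v)|^r)^(1/r) + ((1/(2^s(s+1))) |f'(u)|^r + ((2^(s+1)-1)/(2^s(s+1))) |f'(v)|^r)^(1/r)]. -/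
/-!
Integrating by parts against `x - c`, with `c` the midpoint of each half of `[u, v]`, and using
`f ((u + v) / 2) = (f u + f v) / 2`, turns `(v - u) * ((f u + f v) / 2) - ∫ f` into the sum of
`∫ (x - c) * f' x` over the two halves. Hölder's inequality bounds each of these by the `L^p` norm
of the kernel, computed exactly, times the `L^r` norm of `f'` on that half. Integrating the
s-convexity inequality `|f' x|^r ≤ ((v - x)/(v - u))^s |f' u|^r + ((x - u)/(v - u))^s |f' v|^r`
over each half bounds the latter by the endpoint values; the same inequality shows that `f'` is
bounded, so it lies in `L^r`.
-/

open MeasureTheory intervalIntegral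

/-- `g` is s-convex in the second sense on `[u, v]`. -/
def SConvexSecond (s u v : ℝ) (g : ℝ → ℝ) : Prop :=
  ∀ x ∈ Set.Icc u v, ∀ y ∈ Set.Icc u v, ∀ a ∈ Set.Icc (0:ℝ) 1,
    g (a * x + (1 - a) * y) ≤ a ^ s * g x + (1 - a) ^ s * g y

open Set Real

theorem integral_sub_midpoint_mul_deriv_eq {f f' : ℝ → ℝ} {a b : ℝ}
    (hd : ∀ x ∈ uIcc a b, HasDerivAt f (f' x) x) (hint : IntervalIntegrable f' volume a b) :
    ∫ x in a..b, (x - (a + b) / 2) * f' x = (b - a) / 2 * (f a + f b) - ∫ x in a..b, f x := by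
  have h := integral_mul_deriv_eq_deriv_mul
    (fun x _ => (hasDerivAt_id x).sub_const ((a + b) / 2)) hd intervalIntegrable_const hint
  simp only [id, one_mul] at h
  rw [h]
  ring

theorem integral_sub_midpoint_mul_deriv_add {f f' : ℝ → ℝ} {u m v : ℝ} (hum : u ≤ m)
    (hmv : m ≤ v) (hd : ∀ x ∈ Icc u v, HasDerivAt f (f' x) x)
    (hint : IntervalIntegrable f' volume u v) :
    (∫ x in u..m, (x - (u + m) / 2) * f' x) + ∫ x in m..v, (x - (m + v) / 2) * f' x =
      (m - u) / 2 * f u + (v - u) / 2 * f m + (v - m) / 2 * f v - ∫ x in u..v, f x := by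
  have hsub₁ : uIcc u m ⊆ Icc u v := by rw [uIcc_of_le hum]; exact Icc_subset_Icc_right hmv
  have hsub₂ : uIcc m v ⊆ Icc u v := by rw [uIcc_of_le hmv]; exact Icc_subset_Icc_left hum
  have hf : ContinuousOn f (Icc u v) := fun x hx => (hd x hx).continuousAt.continuousWithinAt
  have hint' : ∀ {a b}, uIcc a b ⊆ Icc u v → IntervalIntegrable f' volume a b := fun h =>
    hint.mono_set (h.trans (uIcc_of_le (hum.trans hmv)).ge)
  rw [integral_sub_midpoint_mul_deriv_eq (fun x hx => hd x (hsub₁ hx)) (hint' hsub₁),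
    integral_sub_midpoint_mul_deriv_eq (fun x hx => hd x (hsub₂ hx)) (hint' hsub₂),
    ← integral_add_adjacent_intervals (hf.mono hsub₁).intervalIntegrable
      (hf.mono hsub₂).intervalIntegrable]
  ring

theorem integral_abs_sub_midpoint_rpow {a b t : ℝ} (hab : a ≤ b) (ht : 0 ≤ t) :
    ∫ x in a..b, |x - (a + b) / 2| ^ t = (b - a) ^ (t + 1) / (2 ^ t * (t + 1)) := by
  set h := (b - a) / 2
  have hcont : Continuous fun x : ℝ => |x| ^ t := continuous_abs.rpow_const fun _ => Or.inr ht
  have hright : ∫ x in (0:ℝ)..h, |x| ^ t = h ^ (t + 1) / (t + 1) := by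
    have h_rpow := integral_rpow (a := 0) (b := h) (Or.inl (by linarith : -1 < t))
    rw [zero_rpow (by positivity), sub_zero] at h_rpow
    rw [← h_rpow]
    refine integral_congr fun x hx => ?_
    rw [uIcc_of_le (by positivity)] at hx
    simp only [abs_of_nonneg hx.1]
  have hleft : ∫ x in -h..0, |x| ^ t = ∫ x in (0:ℝ)..h, |x| ^ t := by
    simpa using integral_comp_neg (a := -h) (b := 0) fun x => |x| ^ t
  rw [integral_comp_sub_right (fun x => |x| ^ t), show a - (a + b) / 2 = -h by ring,
    show b - (a + b) / 2 = h by ring,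
    ← integral_add_adjacent_intervals (hcont.intervalIntegrable _ 0) (hcont.intervalIntegrable 0 _),
    hleft, hright, show b - a = 2 * h by ring, mul_rpow zero_le_two (by positivity),
    rpow_add_one two_ne_zero]
  field_simp
  ring

theorem integral_div_rpow {a b c s : ℝ} (hc : c ≠ 0) (hs : -1 < s) :
    ∫ x in a..b, (x / c) ^ s = c * ((b / c) ^ (s + 1) - (a / c) ^ (s + 1)) / (s + 1) := by
  rw [integral_comp_div (fun x => x ^ s) hc, integral_rpow (Or.inl hs), smul_eq_mul, mul_div_assoc]

theorem integral_div_rpow_zero_half {w s : ℝ} (hw : w ≠ 0) (hs : -1 < s) :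
    ∫ x in (0:ℝ)..w / 2, (x / w) ^ s = w / 2 * (1 / (2 ^ s * (s + 1))) := by
  rw [integral_div_rpow hw hs, zero_div, zero_rpow (by linarith), sub_zero,
    div_div_cancel_left' hw, inv_rpow zero_le_two, rpow_add_one two_ne_zero]
  field_simp

theorem integral_div_rpow_half_self {w s : ℝ} (hw : w ≠ 0) (hs : -1 < s) :
    ∫ x in w / 2..w, (x / w) ^ s = w / 2 * ((2 ^ (s + 1) - 1) / (2 ^ s * (s + 1))) := by
  rw [integral_div_rpow hw hs, div_self hw, one_rpow, div_div_cancel_left' hw,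
    inv_rpow zero_le_two, rpow_add_one two_ne_zero]
  field_simp

theorem abs_intervalIntegral_mul_le_Lp_mul_Lq_s8 {g φ : ℝ → ℝ} {a b p r : ℝ} (hab : a ≤ b)
    (hpr : p.HolderConjugate r) (hg : MemLp g (ENNReal.ofReal p) (volume.restrict (Ioc a b)))
    (hφ : MemLp φ (ENNReal.ofReal r) (volume.restrict (Ioc a b))) :
    |∫ x in a..b, g x * φ x| ≤
      (∫ x in a..b, |g x| ^ p) ^ (1 / p) * (∫ x in a..b, |φ x| ^ r) ^ (1 / r) := by
  simp only [integral_of_le hab, ← Real.norm_eq_abs]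
  calc ‖∫ x in Ioc a b, g x * φ x‖ ≤ ∫ x in Ioc a b, ‖g x‖ * ‖φ x‖ := by
        simpa only [norm_mul] using norm_integral_le_integral_norm (fun x => g x * φ x)
    _ ≤ _ := integral_mul_norm_le_Lp_mul_Lq hpr hg hφ

theorem abs_integral_sub_midpoint_mul_le {φ : ℝ → ℝ} {a b p r X : ℝ} (hab : a < b)
    (hpr : p.HolderConjugate r) (hφ : MemLp φ (ENNReal.ofReal r) (volume.restrict (Ioc a b)))
    (hX : ∫ x in a..b, |φ x| ^ r ≤ (b - a) * X) :
    |∫ x in a..b, (x - (a + b) / 2) * φ x| ≤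
      (b - a) ^ 2 / (2 * (p + 1) ^ (1 / p)) * X ^ (1 / r) := by
  have hp := hpr.pos
  have hba : 0 < b - a := sub_pos.2 hab
  have hmono : Monotone fun x : ℝ => x - (a + b) / 2 := fun _ _ h => sub_le_sub_right h _
  have hkernel : MemLp (fun x => x - (a + b) / 2) (ENNReal.ofReal p) (volume.restrict (Ioc a b)) :=
    (hmono.monotoneOn _).memLp_isCompact isCompact_Icc |>.mono_measure
      (Measure.restrict_mono Ioc_subset_Icc_self le_rfl)
  have hφr : 0 ≤ ∫ x in a..b, |φ x| ^ r := integral_nonneg hab.le fun x _ => by positivity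
  have hX0 : 0 ≤ X := nonneg_of_mul_nonneg_right (hφr.trans hX) hba
  have hexp : (p + 1) * (1 / p) + 1 / r = 2 := by
    rw [add_mul, one_mul, mul_one_div_cancel hp.ne', add_assoc, hpr.one_div_add_one_div]
    norm_num
  calc _ ≤ _ := abs_intervalIntegral_mul_le_Lp_mul_Lq_s8 hab.le hpr hkernel hφ
    _ ≤ ((b - a) ^ (p + 1) / (2 ^ p * (p + 1))) ^ (1 / p) * ((b - a) * X) ^ (1 / r) := by
        rw [integral_abs_sub_midpoint_rpow hab.le hp.le]
        gcongr
        exact hpr.symm.one_div_nonneg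
    _ = _ := by
        rw [div_rpow (by positivity) (by positivity), mul_rpow (by positivity) (by positivity),
          mul_rpow hba.le hX0, ← rpow_mul hba.le, ← rpow_mul zero_le_two,
          mul_one_div_cancel hp.ne', rpow_one, ← rpow_two, ← hexp, rpow_add hba]
        field_simp

theorem intervalIntegrable_abs_rpow_of_memLp {φ : ℝ → ℝ} {a b r : ℝ} (hab : a ≤ b) (hr : 0 < r)
    (hφ : MemLp φ (ENNReal.ofReal r) (volume.restrict (Ioc a b))) :
    IntervalIntegrable (fun x => |φ x| ^ r) volume a b := by
  rw [intervalIntegrable_iff_integrableOn_Ioc_of_le hab, IntegrableOn]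
  simpa [ENNReal.toReal_ofReal hr.le] using
    hφ.integrable_norm_rpow (by simpa using hr) ENNReal.ofReal_ne_top

namespace SConvexSecond

variable {s u v : ℝ} {g : ℝ → ℝ}

theorem le_weighted (hg : SConvexSecond s u v g) (huv : u < v) {x : ℝ} (hx : x ∈ Icc u v) :
    g x ≤ ((v - x) / (v - u)) ^ s * g u + ((x - u) / (v - u)) ^ s * g v := by
  have hw : v - u ≠ 0 := (sub_pos.2 huv).ne'
  have hcomb : (v - x) / (v - u) * u + (1 - (v - x) / (v - u)) * v = x := by
    field_simp
    ring
  have hcompl : 1 - (v - x) / (v - u) = (x - u) / (v - u) := by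
    field_simp
    ring
  have h := hg u (left_mem_Icc.2 huv.le) v (right_mem_Icc.2 huv.le) ((v - x) / (v - u))
    ⟨div_nonneg (by linarith [hx.2]) (by linarith),
      div_le_one_of_le₀ (by linarith [hx.1]) (by linarith)⟩
  rwa [hcomb, hcompl] at h

theorem le_add (hg : SConvexSecond s u v g) (huv : u < v) (hs : 0 ≤ s) (hu : 0 ≤ g u)
    (hv : 0 ≤ g v) {x : ℝ} (hx : x ∈ Icc u v) : g x ≤ g u + g v := by
  have hweight : ∀ y, 0 ≤ y → y ≤ v - u → (y / (v - u)) ^ s ≤ 1 := fun y hy₀ hy₁ =>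
    rpow_le_one (div_nonneg hy₀ (by linarith)) (div_le_one_of_le₀ hy₁ (by linarith)) hs
  calc g x ≤ _ := hg.le_weighted huv hx
    _ ≤ 1 * g u + 1 * g v := by
        gcongr
        exacts [hweight _ (by linarith [hx.2]) (by linarith [hx.1]),
          hweight _ (by linarith [hx.1]) (by linarith [hx.2])]
    _ = g u + g v := by ring

theorem memLp_of_abs_rpow {φ : ℝ → ℝ} {r : ℝ} (hg : SConvexSecond s u v fun x => |φ x| ^ r)
    (huv : u < v) (hs : 0 ≤ s) (hr : 0 < r)
    (hφ : AEStronglyMeasurable φ (volume.restrict (Ioc u v))) :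
    MemLp φ (ENNReal.ofReal r) (volume.restrict (Ioc u v)) := by
  refine MemLp.of_bound hφ ((|φ u| ^ r + |φ v| ^ r) ^ (1 / r))
    (ae_restrict_of_forall_mem measurableSet_Ioc fun x hx => ?_)
  rw [Real.norm_eq_abs, one_div, le_rpow_inv_iff_of_pos (abs_nonneg _) (by positivity) hr]
  exact hg.le_add huv hs (by positivity) (by positivity) (Ioc_subset_Icc_self hx)

theorem integral_le (hg : SConvexSecond s u v g) (huv : u < v) (hs : 0 ≤ s) {a b : ℝ}
    (hua : u ≤ a) (hab : a ≤ b) (hbv : b ≤ v) (hint : IntervalIntegrable g volume a b) :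
    ∫ x in a..b, g x ≤
      g u * (∫ x in v - b..v - a, (x / (v - u)) ^ s) +
        g v * ∫ x in a - u..b - u, (x / (v - u)) ^ s := by
  have hweight : Continuous fun x : ℝ => (x / (v - u)) ^ s :=
    (continuous_id.div_const _).rpow_const fun _ => Or.inr hs
  have hleft : IntervalIntegrable (fun x => ((v - x) / (v - u)) ^ s) volume a b :=
    (hweight.comp (continuous_const.sub continuous_id)).intervalIntegrable a b
  have hright : IntervalIntegrable (fun x => ((x - u) / (v - u)) ^ s) volume a b :=
    (hweight.comp (continuous_id.sub continuous_const)).intervalIntegrable a b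
  rw [← integral_comp_sub_left (fun x => (x / (v - u)) ^ s),
    ← integral_comp_sub_right (fun x => (x / (v - u)) ^ s),
    ← intervalIntegral.integral_const_mul, ← intervalIntegral.integral_const_mul,
    ← integral_add (hleft.const_mul _) (hright.const_mul _)]
  refine integral_mono_on hab hint ((hleft.const_mul _).add (hright.const_mul _)) fun x hx => ?_
  rw [mul_comm (g u), mul_comm (g v)]
  exact hg.le_weighted huv ⟨hua.trans hx.1, hx.2.trans hbv⟩

theorem integral_left_half_le (hg : SConvexSecond s u v g) (huv : u < v) (hs : 0 ≤ s)
    (hint : IntervalIntegrable g volume u ((u + v) / 2)) :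
    ∫ x in u..(u + v) / 2, g x ≤
      (v - u) / 2 * ((2 ^ (s + 1) - 1) / (2 ^ s * (s + 1)) * g u +
        1 / (2 ^ s * (s + 1)) * g v) := by
  have hw : v - u ≠ 0 := (sub_pos.2 huv).ne'
  have hs' : -1 < s := by linarith
  refine (hg.integral_le huv hs le_rfl (by linarith) (by linarith) hint).trans_eq ?_
  rw [show v - (u + v) / 2 = (v - u) / 2 by ring, show (u + v) / 2 - u = (v - u) / 2 by ring,
    sub_self, integral_div_rpow_half_self hw hs', integral_div_rpow_zero_half hw hs']
  ring

theorem integral_right_half_le (hg : SConvexSecond s u v g) (huv : u < v) (hs : 0 ≤ s)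
    (hint : IntervalIntegrable g volume ((u + v) / 2) v) :
    ∫ x in (u + v) / 2..v, g x ≤
      (v - u) / 2 * (1 / (2 ^ s * (s + 1)) * g u +
        (2 ^ (s + 1) - 1) / (2 ^ s * (s + 1)) * g v) := by
  have hw : v - u ≠ 0 := (sub_pos.2 huv).ne'
  have hs' : -1 < s := by linarith
  refine (hg.integral_le huv hs (by linarith) (by linarith) le_rfl hint).trans_eq ?_
  rw [show v - (u + v) / 2 = (v - u) / 2 by ring, show (u + v) / 2 - u = (v - u) / 2 by ring,
    sub_self, integral_div_rpow_half_self hw hs', integral_div_rpow_zero_half hw hs']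
  ring

end SConvexSecond

theorem stmt_8_general (f f' : ℝ → ℝ) (u v p r s : ℝ) (huv : u < v)
    (hs : s ∈ Set.Ioc (0:ℝ) 1) (hp : 1 < p) (hpr : 1 / p + 1 / r = 1)
    (hd : ∀ x ∈ Set.Icc u v, HasDerivAt f (f' x) x)
    (hint : IntervalIntegrable f' volume u v)
    (hsc : SConvexSecond s u v (fun x => |f' x| ^ r))
    (hmid : (f u + f v) / 2 = f ((u + v) / 2)) :
    |(f u + f v) / 2 - (1 / (v - u)) * ∫ x in u..v, f x|
      ≤ ((v - u) / (8 * (p + 1) ^ (1 / p))) *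
          ((((2 ^ (s + 1) - 1) / (2 ^ s * (s + 1))) * |f' u| ^ r
              + (1 / (2 ^ s * (s + 1))) * |f' v| ^ r) ^ (1 / r)
            + ((1 / (2 ^ s * (s + 1))) * |f' u| ^ r
              + ((2 ^ (s + 1) - 1) / (2 ^ s * (s + 1))) * |f' v| ^ r) ^ (1 / r)) := by
  have hpr' : p.HolderConjugate r :=
    Real.holderConjugate_iff.2 ⟨hp, by simpa only [one_div] using hpr⟩
  have hr := hpr'.symm.pos
  have hs₀ : 0 ≤ s := hs.1.le
  have hw : 0 < v - u := sub_pos.2 huv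
  have hum : u < (u + v) / 2 := by linarith
  have hmv : (u + v) / 2 < v := by linarith
  have hmem := hsc.memLp_of_abs_rpow huv hs₀ hr hint.1.aestronglyMeasurable
  have hmem₁ := hmem.mono_measure (Measure.restrict_mono (Ioc_subset_Ioc_right hmv.le) le_rfl)
  have hmem₂ := hmem.mono_measure (Measure.restrict_mono (Ioc_subset_Ioc_left hum.le) le_rfl)
  have h₁ := abs_integral_sub_midpoint_mul_le hum hpr' hmem₁ <| by
    rw [show (u + v) / 2 - u = (v - u) / 2 by ring]
    exact hsc.integral_left_half_le huv hs₀ (intervalIntegrable_abs_rpow_of_memLp hum.le hr hmem₁)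
  have h₂ := abs_integral_sub_midpoint_mul_le hmv hpr' hmem₂ <| by
    rw [show v - (u + v) / 2 = (v - u) / 2 by ring]
    exact hsc.integral_right_half_le huv hs₀ (intervalIntegrable_abs_rpow_of_memLp hmv.le hr hmem₂)
  set I₁ := ∫ x in u..(u + v) / 2, (x - (u + (u + v) / 2) / 2) * f' x
  set I₂ := ∫ x in (u + v) / 2..v, (x - ((u + v) / 2 + v) / 2) * f' x
  have hid : (f u + f v) / 2 - 1 / (v - u) * ∫ x in u..v, f x = 1 / (v - u) * (I₁ + I₂) := by
    rw [integral_sub_midpoint_mul_deriv_add hum.le hmv.le hd hint, ← hmid]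
    field_simp
    ring
  rw [hid, abs_mul, abs_of_pos (one_div_pos.2 hw)]
  refine (mul_le_mul_of_nonneg_left ((abs_add_le _ _).trans (add_le_add h₁ h₂))
    (one_div_pos.2 hw).le).trans_eq ?_
  rw [show (u + v) / 2 - u = (v - u) / 2 by ring, show v - (u + v) / 2 = (v - u) / 2 by ring]
  field_simp
  ring

theorem stmt_8 (f f' : ℝ → ℝ) (u v p r s : ℝ) (hu : 0 ≤ u) (huv : u < v)
    (hs : s ∈ Set.Ioc (0:ℝ) 1) (hp : 1 < p) (hr : 1 < r) (hpr : 1 / p + 1 / r = 1)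
    (hd : ∀ x ∈ Set.Icc u v, HasDerivAt f (f' x) x)
    (hint : IntervalIntegrable f' volume u v)
    (hsc : SConvexSecond s u v (fun x => |f' x| ^ r))
    (hmid : (f u + f v) / 2 = f ((u + v) / 2)) :
    |(f u + f v) / 2 - (1 / (v - u)) * ∫ x in u..v, f x|
      ≤ ((v - u) / (8 * (p + 1) ^ (1 / p))) *
          ((((2 ^ (s + 1) - 1) / (2 ^ s * (s + 1))) * |f' u| ^ r
              + (1 / (2 ^ s * (s + 1))) * |f' v| ^ r) ^ (1 / r)
            + ((1 / (2 ^ s * (s + 1))) * |f' u| ^ r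
              + ((2 ^ (s + 1) - 1) / (2 ^ s * (s + 1))) * |f' v| ^ r) ^ (1 / r)) :=
  stmt_8_general f f' u v p r s huv hs hp hpr hd hint hsc hmid
end

section
/- Let f be differentiable on an interval containing [u,v] with 0 ≤ u < v, f' integrable, and |f'|^r s-convex in the second sense on [u,v] for some s ∈ (0,1], r ≥ 1. Then |(1/2)[(f(u)+f(v))/2 + f((u+v)/2)] - (1/(v-u)) ∫ᵤᵛ f(x) dx| ≤ ((v-u)/(8(2^(s-1)(s+1)(s+2))^(1/r))) (1/2)^(1-1/r) · { [(3^(s+2)/2^(s+1) - (2^(s+2)+s-2^(s+1)s+4)/2) |f'(u)|^r + (s/2 + 1/2^(s+1)) |f'(v)|^r]^(1/r) + [(s/2 + 1/2^(s+1)) |f'(u)|^r + (3^(s+2)/2^(s+1) - (2^(s+2)+s-2^(s+1)s+4)/2) |f'(v)|^r]^(1/r) }. -/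
open MeasureTheory intervalIntegral

/-!
Integration by parts against the kernel `x - (3u+v)/4` on `[u, (u+v)/2]` and `x - (u+3v)/4` on
`[(u+v)/2, v]` writes the left-hand side as `(v - u)⁻¹` times the sum of the integrals of kernel
times `f'`. On each half, Hölder's inequality with weight `|kernel|` and s-convexity in the form
`|f' x| ^ r ≤ (1 - t) ^ s * |f' u| ^ r + t ^ s * |f' v| ^ r`, `t = (x - u) / (v - u)`, leave
weighted integrals that the substitution `x = u + (v - u) t` and the reflection `t ↦ 1 - t` reduce
to `∫ t in 0..1/2, |t - 1/4| * t ^ s` and `∫ t in 1/2..1, |t - 3/4| * t ^ s`, computed with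
the antiderivative `t ^ (s+2) / (s+2) - p * t ^ (s+1) / (s+1)` of `(t - p) * t ^ s`.
-/

theorem SConvexSecond.le_of_mem_Icc {s u v x : ℝ} {g : ℝ → ℝ} (hg : SConvexSecond s u v g)
    (huv : u < v) (hx : x ∈ Set.Icc u v) :
    g x ≤ (1 - (x - u) / (v - u)) ^ s * g u + ((x - u) / (v - u)) ^ s * g v := by
  have hvu : 0 < v - u := sub_pos.2 huv
  have ht : (x - u) / (v - u) ∈ Set.Icc (0 : ℝ) 1 :=
    ⟨div_nonneg (by linarith [hx.1]) hvu.le, (div_le_one hvu).2 (by linarith [hx.2])⟩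
  have h := hg v ⟨huv.le, le_rfl⟩ u ⟨le_rfl, huv.le⟩ _ ht
  rwa [show (x - u) / (v - u) * v + (1 - (x - u) / (v - u)) * u = x by field_simp; ring,
    add_comm] at h

theorem integral_sub_mul_deriv_eq {f f' : ℝ → ℝ} {a b : ℝ} (p : ℝ)
    (hd : ∀ x ∈ Set.uIcc a b, HasDerivAt f (f' x) x) (hint : IntervalIntegrable f' volume a b) :
    ∫ x in a..b, (x - p) * f' x = (b - p) * f b - (a - p) * f a - ∫ x in a..b, f x := by
  simpa using integral_mul_deriv_eq_deriv_mul (fun x _ => (hasDerivAt_id x).sub_const p) hd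
    intervalIntegrable_const hint

theorem trapezoid_midpoint_average_sub_integral_eq {f f' : ℝ → ℝ} {u v : ℝ} (huv : u < v)
    (hd : ∀ x ∈ Set.Icc u v, HasDerivAt f (f' x) x) (hint : IntervalIntegrable f' volume u v) :
    (1 / 2) * ((f u + f v) / 2 + f ((u + v) / 2)) - (1 / (v - u)) * ∫ x in u..v, f x
      = ((∫ x in u..(u + v) / 2, (x - (3 * u + v) / 4) * f' x)
          + ∫ x in (u + v) / 2..v, (x - (u + 3 * v) / 4) * f' x) / (v - u) := by
  have hm : (u + v) / 2 ∈ Set.uIcc u v := by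
    rw [Set.uIcc_of_le huv.le]; constructor <;> linarith
  have hsub₁ := Set.uIcc_subset_uIcc_left hm
  have hsub₂ := Set.uIcc_subset_uIcc_right hm
  have hd' : ∀ x ∈ Set.uIcc u v, HasDerivAt f (f' x) x := by rwa [Set.uIcc_of_le huv.le]
  have hf : ContinuousOn f (Set.uIcc u v) := fun x hx =>
    (hd' x hx).continuousAt.continuousWithinAt
  rw [integral_sub_mul_deriv_eq _ (fun x hx => hd' x (hsub₁ hx)) (hint.mono_set hsub₁),
    integral_sub_mul_deriv_eq _ (fun x hx => hd' x (hsub₂ hx)) (hint.mono_set hsub₂),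
    ← integral_add_adjacent_intervals ((hf.mono hsub₁).intervalIntegrable)
      ((hf.mono hsub₂).intervalIntegrable)]
  have : v - u ≠ 0 := sub_ne_zero.2 huv.ne'
  field_simp
  ring

theorem integral_mul_abs_le_rpow {α : Type*} [MeasurableSpace α] {μ : Measure α}
    {w g : α → ℝ} {r : ℝ} (hr : 1 ≤ r) (hw0 : 0 ≤ᵐ[μ] w) (hw : Integrable w μ)
    (hg : AEStronglyMeasurable g μ) (hwg : Integrable (fun x => w x * |g x| ^ r) μ) :
    ∫ x, w x * |g x| ∂μ
      ≤ (∫ x, w x ∂μ) ^ (1 - 1 / r) * (∫ x, w x * |g x| ^ r ∂μ) ^ (1 / r) := by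
  obtain rfl | hr1 := hr.eq_or_lt
  · simp
  have hr0 : 0 < r := one_pos.trans hr1
  set q := r / (r - 1)
  have hqr : q.HolderConjugate r := (Real.HolderConjugate.conjExponent hr1).symm
  have hq : 1 / q = 1 - 1 / r := by
    have := hqr.inv_add_inv_eq_one
    rw [one_div, one_div]; linarith
  have hFq : ∀ᵐ x ∂μ, (w x ^ (1 / q)) ^ q = w x := hw0.mono fun x hx => by
    rw [← Real.rpow_mul hx, one_div_mul_cancel hqr.ne_zero, Real.rpow_one]
  have hGr : ∀ᵐ x ∂μ, (w x ^ (1 / r) * |g x|) ^ r = w x * |g x| ^ r :=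
    hw0.mono fun x hx => by
      rw [Real.mul_rpow (Real.rpow_nonneg hx _) (abs_nonneg _), ← Real.rpow_mul hx,
        one_div_mul_cancel hr0.ne', Real.rpow_one]
  have hFG : ∀ᵐ x ∂μ, w x ^ (1 / q) * (w x ^ (1 / r) * |g x|) = w x * |g x| :=
    hw0.mono fun x hx => by
      rw [← mul_assoc, ← Real.rpow_add' hx (by rw [hq]; simp), hq, sub_add_cancel,
        Real.rpow_one]
  have hF : MemLp (fun x => w x ^ (1 / q)) (ENNReal.ofReal q) μ := by
    rw [← integrable_norm_rpow_iff (hw.1.aemeasurable.pow_const _).aestronglyMeasurable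
      (by simp [hqr.pos]) (by simp), ENNReal.toReal_ofReal hqr.nonneg]
    refine hw.congr ?_
    filter_upwards [hw0, hFq] with x hx hx'
    rw [Real.norm_of_nonneg (Real.rpow_nonneg hx _), hx']
  have hG : MemLp (fun x => w x ^ (1 / r) * |g x|) (ENNReal.ofReal r) μ := by
    have hGm : AEStronglyMeasurable (fun x => w x ^ (1 / r) * |g x|) μ :=
      (hw.1.aemeasurable.pow_const _).aestronglyMeasurable.mul
        (continuous_abs.comp_aestronglyMeasurable hg)
    rw [← integrable_norm_rpow_iff hGm (by simp [hr0]) (by simp), ENNReal.toReal_ofReal hr0.le]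
    refine hwg.congr ?_
    filter_upwards [hw0, hGr] with x hx hx'
    rw [Real.norm_of_nonneg (mul_nonneg (Real.rpow_nonneg hx _) (abs_nonneg _)), hx']
  have := integral_mul_le_Lp_mul_Lq_of_nonneg hqr
    (hw0.mono fun x hx => Real.rpow_nonneg hx _)
    (hw0.mono fun x hx => mul_nonneg (Real.rpow_nonneg hx _) (abs_nonneg _)) hF hG
  rwa [integral_congr_ae hFG, integral_congr_ae hFq, integral_congr_ae hGr, hq] at this

theorem abs_integral_sub_mul_le_s15 {g φ : ℝ → ℝ} {a b p r : ℝ} (hab : a ≤ b) (hr : 1 ≤ r)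
    (hg : IntervalIntegrable g volume a b) (hφ : ContinuousOn φ (Set.Icc a b))
    (hgφ : ∀ x ∈ Set.Icc a b, |g x| ^ r ≤ φ x) :
    |∫ x in a..b, (x - p) * g x|
      ≤ (∫ x in a..b, |x - p|) ^ (1 - 1 / r) * (∫ x in a..b, |x - p| * φ x) ^ (1 / r) := by
  have hw : Continuous fun x => |x - p| := by fun_prop
  have hwφ : IntegrableOn (fun x => |x - p| * φ x) (Set.Ioc a b) :=
    ((hw.continuousOn.mul hφ).integrableOn_Icc).mono_set Set.Ioc_subset_Icc_self
  have hwg : IntegrableOn (fun x => |x - p| * |g x| ^ r) (Set.Ioc a b) := by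
    refine hwφ.mono' ((hw.aestronglyMeasurable.mul
      ((hg.1.aemeasurable.abs).pow_const r).aestronglyMeasurable)) ?_
    filter_upwards [ae_restrict_mem measurableSet_Ioc] with x hx
    rw [Real.norm_of_nonneg (by positivity)]
    exact mul_le_mul_of_nonneg_left (hgφ x (Set.Ioc_subset_Icc_self hx)) (abs_nonneg _)
  calc |∫ x in a..b, (x - p) * g x|
      ≤ ∫ x in a..b, |x - p| * |g x| := by
        refine (abs_integral_le_integral_abs hab).trans_eq ?_
        simp only [abs_mul]
    _ ≤ (∫ x in a..b, |x - p|) ^ (1 - 1 / r)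
          * (∫ x in a..b, |x - p| * |g x| ^ r) ^ (1 / r) := by
        simp only [integral_of_le hab]
        exact integral_mul_abs_le_rpow (w := fun x => |x - p|) hr
          (ae_of_all _ fun x => abs_nonneg _)
          (hw.continuousOn.integrableOn_Icc.mono_set Set.Ioc_subset_Icc_self)
          hg.1.aestronglyMeasurable hwg
    _ ≤ _ := by
        refine mul_le_mul_of_nonneg_left (Real.rpow_le_rpow
          (integral_nonneg hab fun x _ => by positivity) ?_ (by positivity))
          (Real.rpow_nonneg (integral_nonneg hab fun x _ => abs_nonneg _) _)
        exact integral_mono_on hab ((intervalIntegrable_iff_integrableOn_Ioc_of_le hab).2 hwg)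
          ((intervalIntegrable_iff_integrableOn_Ioc_of_le hab).2 hwφ) fun x hx =>
            mul_le_mul_of_nonneg_left (hgφ x hx) (abs_nonneg _)

theorem integral_abs_sub_mul_eq {F h : ℝ → ℝ} {a b p : ℝ} (hap : a ≤ p) (hpb : p ≤ b)
    (hF : ∀ x ∈ Set.Icc a b, HasDerivAt F ((x - p) * h x) x)
    (hh : ContinuousOn h (Set.Icc a b)) :
    ∫ x in a..b, |x - p| * h x = F a + F b - 2 * F p := by
  have hsub : ∀ {c d}, a ≤ c → c ≤ d → d ≤ b → Set.uIcc c d ⊆ Set.Icc a b :=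
    fun hac hcd hdb => by rw [Set.uIcc_of_le hcd]; exact Set.Icc_subset_Icc hac hdb
  have hFTC : ∀ {c d}, a ≤ c → c ≤ d → d ≤ b →
      ∫ x in c..d, (x - p) * h x = F d - F c :=
    fun hac hcd hdb => integral_eq_sub_of_hasDerivAt (fun x hx => hF x (hsub hac hcd hdb hx))
      ((continuousOn_id.sub continuousOn_const).mul
        (hh.mono (hsub hac hcd hdb))).intervalIntegrable
  have hint : ∀ {c d}, a ≤ c → c ≤ d → d ≤ b →
      IntervalIntegrable (fun x => |x - p| * h x) volume c d := fun hac hcd hdb =>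
    ((continuousOn_id.sub continuousOn_const).abs.mul
      (hh.mono (hsub hac hcd hdb))).intervalIntegrable
  have hleft : ∫ x in a..p, |x - p| * h x = -∫ x in a..p, (x - p) * h x := by
    rw [← intervalIntegral.integral_neg]
    refine integral_congr fun x hx => ?_
    rw [Set.uIcc_of_le hap] at hx
    simp only [abs_of_nonpos (sub_nonpos.2 hx.2), neg_mul]
  have hright : ∫ x in p..b, |x - p| * h x = ∫ x in p..b, (x - p) * h x := by
    refine integral_congr fun x hx => ?_
    rw [Set.uIcc_of_le hpb] at hx
    simp only [abs_of_nonneg (sub_nonneg.2 hx.1)]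
  rw [← integral_add_adjacent_intervals (hint le_rfl hap hpb) (hint hap hpb le_rfl), hleft,
    hright, hFTC le_rfl hap hpb, hFTC hap hpb le_rfl]
  ring

theorem integral_abs_sub {a b p : ℝ} (hap : a ≤ p) (hpb : p ≤ b) :
    ∫ x in a..b, |x - p| = ((p - a) ^ 2 + (b - p) ^ 2) / 2 := by
  have := integral_abs_sub_mul_eq (F := fun x => (x - p) ^ 2 / 2) (h := fun _ => 1) hap hpb
    (fun x _ => by simpa using (((hasDerivAt_id' x).sub_const p).pow 2).div_const (2:ℝ))
    continuousOn_const
  simp only [mul_one] at this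
  rw [this]
  ring

theorem hasDerivAt_antiderivative_sub_mul_rpow {s p x : ℝ} (hs : 0 ≤ s) (hx : 0 ≤ x) :
    HasDerivAt (fun t => t ^ (s + 2) / (s + 2) - p * t ^ (s + 1) / (s + 1))
      ((x - p) * x ^ s) x := by
  have h2 := (Real.hasDerivAt_rpow_const (x := x) (p := s + 2)
    (Or.inr (by linarith))).div_const (s + 2)
  have h1 := ((Real.hasDerivAt_rpow_const (x := x) (p := s + 1)
    (Or.inr (by linarith))).const_mul p).div_const (s + 1)
  refine (h2.sub h1).congr_deriv ?_
  rw [show s + 2 - 1 = s + 1 by ring, add_sub_cancel_right, Real.rpow_add_one' hx (by linarith)]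
  field_simp

theorem integral_abs_sub_quarter_mul_rpow {s : ℝ} (hs : 0 ≤ s) :
    ∫ x in (0:ℝ)..1/2, |x - 1/4| * x ^ s
      = (s / 2 + 1 / 2 ^ (s + 1)) / (8 * (2 ^ (s - 1) * (s + 1) * (s + 2))) := by
  rw [integral_abs_sub_mul_eq (by norm_num) (by norm_num)
    (fun x hx => hasDerivAt_antiderivative_sub_mul_rpow hs hx.1)
    (Real.continuous_rpow_const hs).continuousOn]
  rw [show (1/4 : ℝ) = 1/2 * (1/2) by norm_num, Real.mul_rpow (by norm_num) (by norm_num),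
    Real.mul_rpow (by norm_num) (by norm_num)]
  simp only [Real.rpow_add (by norm_num : (0:ℝ) < 1/2), Real.rpow_add (by norm_num : (0:ℝ) < 2),
    Real.rpow_sub (by norm_num : (0:ℝ) < 2), Real.zero_rpow (by linarith : s + 2 ≠ 0),
    Real.zero_rpow (by linarith : s + 1 ≠ 0), Real.div_rpow zero_le_one zero_le_two,
    Real.one_rpow, Real.rpow_one, Real.rpow_two]
  have : (0:ℝ) < 2 ^ s := by positivity
  field_simp
  ring

theorem integral_abs_sub_three_quarters_mul_rpow {s : ℝ} (hs : 0 ≤ s) :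
    ∫ x in (1/2:ℝ)..1, |x - 3/4| * x ^ s
      = (3 ^ (s + 2) / 2 ^ (s + 1) - (2 ^ (s + 2) + s - 2 ^ (s + 1) * s + 4) / 2)
        / (8 * (2 ^ (s - 1) * (s + 1) * (s + 2))) := by
  rw [integral_abs_sub_mul_eq (by norm_num) (by norm_num)
    (fun x hx => hasDerivAt_antiderivative_sub_mul_rpow hs (by linarith [hx.1]))
    (Real.continuous_rpow_const hs).continuousOn]
  rw [show (3/4 : ℝ) = 3 * (1/2 * (1/2)) by norm_num]
  simp only [Real.mul_rpow (by norm_num : (0:ℝ) ≤ 3) (by norm_num : (0:ℝ) ≤ 1/2 * (1/2)),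
    Real.mul_rpow (by norm_num : (0:ℝ) ≤ 1/2) (by norm_num : (0:ℝ) ≤ 1/2),
    Real.rpow_add (by norm_num : (0:ℝ) < 1/2), Real.rpow_add (by norm_num : (0:ℝ) < 2),
    Real.rpow_add (by norm_num : (0:ℝ) < 3), Real.rpow_sub (by norm_num : (0:ℝ) < 2),
    Real.div_rpow zero_le_one zero_le_two, Real.one_rpow, Real.rpow_one, Real.rpow_two]
  have : (0:ℝ) < 2 ^ s := by positivity
  field_simp
  ring

theorem three_pow_div_two_pow_sub_nonneg {s : ℝ} (hs : 0 ≤ s) :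
    0 ≤ 3 ^ (s + 2) / 2 ^ (s + 1) - (2 ^ (s + 2) + s - 2 ^ (s + 1) * s + 4) / 2 := by
  have hK : 0 < 8 * (2 ^ (s - 1) * (s + 1) * (s + 2)) := by positivity
  have h : 0 ≤ ∫ x in (1/2:ℝ)..1, |x - 3/4| * x ^ s :=
    integral_nonneg (by norm_num) fun x hx => mul_nonneg (abs_nonneg _)
      (Real.rpow_nonneg (by linarith [hx.1]) _)
  rw [integral_abs_sub_three_quarters_mul_rpow hs] at h
  simpa [div_mul_cancel₀ _ hK.ne'] using mul_nonneg h hK.le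

theorem integral_abs_sub_quarter_mul_comp_one_sub (h : ℝ → ℝ) :
    ∫ x in (0:ℝ)..1/2, |x - 1/4| * h (1 - x) = ∫ x in (1/2:ℝ)..1, |x - 3/4| * h x := by
  have := integral_comp_sub_left (fun x => |x - 3/4| * h x) (a := 0) (b := 1/2) 1
  rw [show (1:ℝ) - 1/2 = 1/2 by norm_num, sub_zero] at this
  rw [← this]
  refine integral_congr fun x _ => ?_
  rw [show 1 - x - 3/4 = -(x - 1/4) by ring, abs_neg]

theorem integral_abs_sub_quarter_mul_majorant {s : ℝ} (hs : 0 ≤ s) (X Y : ℝ) :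
    ∫ t in (0:ℝ)..1/2, |t - 1/4| * ((1 - t) ^ s * X + t ^ s * Y)
      = ((3 ^ (s + 2) / 2 ^ (s + 1) - (2 ^ (s + 2) + s - 2 ^ (s + 1) * s + 4) / 2) * X
          + (s / 2 + 1 / 2 ^ (s + 1)) * Y) / (8 * (2 ^ (s - 1) * (s + 1) * (s + 2))) := by
  have hpow := Real.continuous_rpow_const hs
  have hsplit : ∫ t in (0:ℝ)..1/2, |t - 1/4| * ((1 - t) ^ s * X + t ^ s * Y)
      = X * (∫ t in (0:ℝ)..1/2, |t - 1/4| * (1 - t) ^ s)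
        + Y * ∫ t in (0:ℝ)..1/2, |t - 1/4| * t ^ s := by
    rw [← intervalIntegral.integral_const_mul, ← intervalIntegral.integral_const_mul,
      ← intervalIntegral.integral_add]
    · exact integral_congr fun t _ => by ring
    all_goals exact (by fun_prop : Continuous _).intervalIntegrable _ _
  rw [hsplit, integral_abs_sub_quarter_mul_comp_one_sub (· ^ s),
    integral_abs_sub_three_quarters_mul_rpow hs, integral_abs_sub_quarter_mul_rpow hs]
  ring

theorem integral_abs_sub_three_quarters_mul_majorant {s : ℝ} (hs : 0 ≤ s) (X Y : ℝ) :
    ∫ t in (1/2:ℝ)..1, |t - 3/4| * ((1 - t) ^ s * X + t ^ s * Y)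
      = ((s / 2 + 1 / 2 ^ (s + 1)) * X
          + (3 ^ (s + 2) / 2 ^ (s + 1) - (2 ^ (s + 2) + s - 2 ^ (s + 1) * s + 4) / 2) * Y)
        / (8 * (2 ^ (s - 1) * (s + 1) * (s + 2))) := by
  calc _ = ∫ t in (0:ℝ)..1/2, |t - 1/4| * ((1 - t) ^ s * Y + t ^ s * X) := by
        rw [← integral_abs_sub_quarter_mul_comp_one_sub]
        refine integral_congr fun t _ => ?_
        simp only [sub_sub_cancel]
        ring
    _ = _ := by
        rw [integral_abs_sub_quarter_mul_majorant hs]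
        ring

theorem integral_abs_sub_mul_comp_mul_add {c : ℝ} (hc : 0 < c) (d a b p : ℝ) (h : ℝ → ℝ) :
    ∫ x in c * a + d..c * b + d, |x - (c * p + d)| * h x
      = c ^ 2 * ∫ t in a..b, |t - p| * h (c * t + d) := by
  rw [← smul_integral_comp_mul_add, smul_eq_mul, sq, mul_assoc]
  congr 1
  rw [← intervalIntegral.integral_const_mul]
  refine intervalIntegral.integral_congr fun t _ => ?_
  rw [show c * t + d - (c * p + d) = c * (t - p) by ring, abs_mul, abs_of_pos hc]
  ring

theorem integral_abs_sub_mul_majorant_left {s u v : ℝ} (hs : 0 ≤ s) (huv : u < v) (X Y : ℝ) :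
    ∫ x in u..(u + v) / 2, |x - (3 * u + v) / 4|
        * ((1 - (x - u) / (v - u)) ^ s * X + ((x - u) / (v - u)) ^ s * Y)
      = (v - u) ^ 2
        * (((3 ^ (s + 2) / 2 ^ (s + 1) - (2 ^ (s + 2) + s - 2 ^ (s + 1) * s + 4) / 2) * X
          + (s / 2 + 1 / 2 ^ (s + 1)) * Y) / (8 * (2 ^ (s - 1) * (s + 1) * (s + 2)))) := by
  have hc : 0 < v - u := sub_pos.2 huv
  have h := integral_abs_sub_mul_comp_mul_add hc u 0 (1/2) (1/4)
    fun x => (1 - (x - u) / (v - u)) ^ s * X + ((x - u) / (v - u)) ^ s * Y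
  rw [show (v - u) * 0 + u = u by ring, show (v - u) * (1/2) + u = (u + v) / 2 by ring,
    show (v - u) * (1/4) + u = (3 * u + v) / 4 by ring] at h
  rw [h, ← integral_abs_sub_quarter_mul_majorant hs]
  simp only [add_sub_cancel_right, mul_div_cancel_left₀ _ hc.ne']

theorem integral_abs_sub_mul_majorant_right {s u v : ℝ} (hs : 0 ≤ s) (huv : u < v) (X Y : ℝ) :
    ∫ x in (u + v) / 2..v, |x - (u + 3 * v) / 4|
        * ((1 - (x - u) / (v - u)) ^ s * X + ((x - u) / (v - u)) ^ s * Y)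
      = (v - u) ^ 2 * (((s / 2 + 1 / 2 ^ (s + 1)) * X
          + (3 ^ (s + 2) / 2 ^ (s + 1) - (2 ^ (s + 2) + s - 2 ^ (s + 1) * s + 4) / 2) * Y)
        / (8 * (2 ^ (s - 1) * (s + 1) * (s + 2)))) := by
  have hc : 0 < v - u := sub_pos.2 huv
  have h := integral_abs_sub_mul_comp_mul_add hc u (1/2) 1 (3/4)
    fun x => (1 - (x - u) / (v - u)) ^ s * X + ((x - u) / (v - u)) ^ s * Y
  rw [show (v - u) * (1/2) + u = (u + v) / 2 by ring, show (v - u) * 1 + u = v by ring,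
    show (v - u) * (3/4) + u = (u + 3 * v) / 4 by ring] at h
  rw [h, ← integral_abs_sub_three_quarters_mul_majorant hs]
  simp only [add_sub_cancel_right, mul_div_cancel_left₀ _ hc.ne']

theorem rpow_one_sub_mul_rpow_of_mul {a x y θ : ℝ} (ha : 0 ≤ a) (hx : 0 ≤ x) (hy : 0 ≤ y) :
    (a * x) ^ (1 - θ) * (a * y) ^ θ = a * (x ^ (1 - θ) * y ^ θ) := by
  rw [Real.mul_rpow ha hx, Real.mul_rpow ha hy, mul_mul_mul_comm, ← Real.rpow_add' ha (by simp),
    sub_add_cancel, Real.rpow_one]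

theorem sq_div_sixteen_rpow_mul_rpow_eq {L D K r : ℝ} (hD : 0 ≤ D) (hK : 0 < K) :
    (L ^ 2 / 16) ^ (1 - 1 / r) * (L ^ 2 * (D / (8 * K))) ^ (1 / r)
      = L * (L / (8 * K ^ (1 / r)) * (1 / 2) ^ (1 - 1 / r) * D ^ (1 / r)) := by
  rw [show L ^ 2 / 16 = L ^ 2 / 8 * (1 / 2) by ring,
    show L ^ 2 * (D / (8 * K)) = L ^ 2 / 8 * (D / K) by ring,
    rpow_one_sub_mul_rpow_of_mul (by positivity) (by norm_num) (div_nonneg hD hK.le),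
    Real.div_rpow hD hK.le]
  field_simp

theorem stmt_15_general (f f' : ℝ → ℝ) (u v r s : ℝ) (huv : u < v)
    (hs : s ∈ Set.Ioc (0:ℝ) 1) (hr : 1 ≤ r)
    (hd : ∀ x ∈ Set.Icc u v, HasDerivAt f (f' x) x)
    (hint : IntervalIntegrable f' volume u v)
    (hsc : SConvexSecond s u v (fun x => |f' x| ^ r)) :
    |(1 / 2) * ((f u + f v) / 2 + f ((u + v) / 2))
        - (1 / (v - u)) * ∫ x in u..v, f x|
      ≤ ((v - u) / (8 * (2 ^ (s - 1) * (s + 1) * (s + 2)) ^ (1 / r))) *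
          (1 / 2 : ℝ) ^ (1 - 1 / r) *
          (((3 ^ (s + 2) / 2 ^ (s + 1) - (2 ^ (s + 2) + s - 2 ^ (s + 1) * s + 4) / 2)
                * |f' u| ^ r
              + (s / 2 + 1 / 2 ^ (s + 1)) * |f' v| ^ r) ^ (1 / r)
            + ((s / 2 + 1 / 2 ^ (s + 1)) * |f' u| ^ r
              + (3 ^ (s + 2) / 2 ^ (s + 1) - (2 ^ (s + 2) + s - 2 ^ (s + 1) * s + 4) / 2)
                * |f' v| ^ r) ^ (1 / r)) := by
  have hs0 : 0 ≤ s := hs.1.le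
  have hc : 0 < v - u := sub_pos.2 huv
  have hm : (u + v) / 2 ∈ Set.Icc u v := ⟨by linarith, by linarith⟩
  have hK : 0 < 2 ^ (s - 1) * (s + 1) * (s + 2) := by positivity
  have hA := three_pow_div_two_pow_sub_nonneg hs0
  have hφ : Continuous fun x =>
      (1 - (x - u) / (v - u)) ^ s * |f' u| ^ r + ((x - u) / (v - u)) ^ s * |f' v| ^ r := by
    fun_prop (disch := exact hs0)
  have h₁ := abs_integral_sub_mul_le_s15 (p := (3 * u + v) / 4) hm.1 hr
    (hint.mono_set (Set.uIcc_subset_uIcc_left (by rwa [Set.uIcc_of_le huv.le])))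
    hφ.continuousOn fun x hx => hsc.le_of_mem_Icc huv ⟨hx.1, hx.2.trans hm.2⟩
  have h₂ := abs_integral_sub_mul_le_s15 (p := (u + 3 * v) / 4) hm.2 hr
    (hint.mono_set (Set.uIcc_subset_uIcc_right (by rwa [Set.uIcc_of_le huv.le])))
    hφ.continuousOn fun x hx => hsc.le_of_mem_Icc huv ⟨hm.1.trans hx.1, hx.2⟩
  have hw₁ : ∫ x in u..(u + v) / 2, |x - (3 * u + v) / 4| = (v - u) ^ 2 / 16 := by
    rw [integral_abs_sub (by linarith) (by linarith)]; ring
  have hw₂ : ∫ x in (u + v) / 2..v, |x - (u + 3 * v) / 4| = (v - u) ^ 2 / 16 := by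
    rw [integral_abs_sub (by linarith) (by linarith)]; ring
  rw [hw₁, integral_abs_sub_mul_majorant_left hs0 huv,
    sq_div_sixteen_rpow_mul_rpow_eq (by positivity) hK] at h₁
  rw [hw₂, integral_abs_sub_mul_majorant_right hs0 huv,
    sq_div_sixteen_rpow_mul_rpow_eq (by positivity) hK] at h₂
  rw [trapezoid_midpoint_average_sub_integral_eq huv hd hint, abs_div, abs_of_pos hc]
  refine (div_le_div_of_nonneg_right ((abs_add_le _ _).trans (add_le_add h₁ h₂))
    hc.le).trans_eq ?_
  rw [← mul_add, mul_div_cancel_left₀ _ hc.ne']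
  ring

theorem stmt_15 (f f' : ℝ → ℝ) (u v r s : ℝ) (hu : 0 ≤ u) (huv : u < v)
    (hs : s ∈ Set.Ioc (0:ℝ) 1) (hr : 1 ≤ r)
    (hd : ∀ x ∈ Set.Icc u v, HasDerivAt f (f' x) x)
    (hint : IntervalIntegrable f' volume u v)
    (hsc : SConvexSecond s u v (fun x => |f' x| ^ r)) :
    |(1 / 2) * ((f u + f v) / 2 + f ((u + v) / 2))
        - (1 / (v - u)) * ∫ x in u..v, f x|
      ≤ ((v - u) / (8 * (2 ^ (s - 1) * (s + 1) * (s + 2)) ^ (1 / r))) *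
          (1 / 2 : ℝ) ^ (1 - 1 / r) *
          (((3 ^ (s + 2) / 2 ^ (s + 1) - (2 ^ (s + 2) + s - 2 ^ (s + 1) * s + 4) / 2)
                * |f' u| ^ r
              + (s / 2 + 1 / 2 ^ (s + 1)) * |f' v| ^ r) ^ (1 / r)
            + ((s / 2 + 1 / 2 ^ (s + 1)) * |f' u| ^ r
              + (3 ^ (s + 2) / 2 ^ (s + 1) - (2 ^ (s + 2) + s - 2 ^ (s + 1) * s + 4) / 2)
                * |f' v| ^ r) ^ (1 / r)) :=
  stmt_15_general f f' u v r s huv hs hr hd hint hsc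
end

section
/- Let s ∈ (0,1], 0 < u < v, p, r > 1 with 1/p + 1/r = 1. Then |A(u^s, v^s) - L_s^s(u,v)| ≤ ((v-u)/4)(1/(p+1))^(1/p) [ (s(2^(s+1)-1) u^(r(s-1))/(2^s(s+1)) + s v^(r(s-1))/(2^s(s+1)))^(1/r) + (s u^(r(s-1))/(2^s(s+1)) + s(2^(s+1)-1) v^(r(s-1))/(2^s(s+1)))^(1/r) ], where A(a,b) = (a+b)/2 is the arithmetic mean and L_s(u,v) = ((v^(s+1)-u^(s+1))/((s+1)(v-u)))^(1/s) is the generalized logarithmic mean, so L_s^s(u,v) = (v^(s+1)-u^(s+1))/((s+1)(v-u)). -/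
/-!
Integration by parts turns the trapezoid error into a kernel integral:
`(f a + f b) / 2 - (b - a)⁻¹ ∫ f = (b - a)⁻¹ ∫ (x - m) f' x` with `m` the midpoint.
On each half of `[a, b]`, Hölder's inequality bounds that integral by `‖x - m‖_p ‖f'‖_r`, and the
`s`-convexity of `|f'| ^ r` bounds `∫ |f'| ^ r` by integrating the weights `t ^ s` against the
endpoint values. For `f x = x ^ s` one has `|f'| ^ r = s ^ r x ^ (r (s - 1))`, which is convex
since the exponent is nonpositive, hence `s`-convex; finally `s ^ r ≤ s`.
-/

open Real Set MeasureTheory intervalIntegral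

theorem integral_sub_div_rpow {a b c d s : ℝ} (hd : d ≠ 0) (hs : -1 < s) :
    ∫ x in a..b, ((x - c) / d) ^ s
      = d * (((b - c) / d) ^ (s + 1) - ((a - c) / d) ^ (s + 1)) / (s + 1) := by
  simp only [sub_div]
  rw [integral_comp_div_sub (fun x => x ^ s) hd, integral_rpow (Or.inl hs), smul_eq_mul,
    mul_div_assoc]

theorem integral_rsub_div_rpow {a b c d s : ℝ} (hd : d ≠ 0) (hs : -1 < s) :
    ∫ x in a..b, ((c - x) / d) ^ s
      = d * (((c - a) / d) ^ (s + 1) - ((c - b) / d) ^ (s + 1)) / (s + 1) := by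
  simp only [sub_div]
  rw [integral_comp_sub_div (fun x => x ^ s) hd, integral_rpow (Or.inl hs), smul_eq_mul,
    mul_div_assoc]

theorem integral_abs_rpow_of_nonneg {c p : ℝ} (hc : 0 ≤ c) (hp : -1 < p) :
    ∫ x in (0 : ℝ)..c, |x| ^ p = c ^ (p + 1) / (p + 1) := by
  rw [integral_congr (g := fun x => x ^ p) fun x hx => ?_, integral_rpow (Or.inl hp),
    zero_rpow (by linarith), sub_zero]
  rw [uIcc_of_le hc] at hx
  simp only [abs_of_nonneg hx.1]

theorem integral_abs_sub_left_rpow {a b p : ℝ} (hab : a ≤ b) (hp : -1 < p) :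
    ∫ x in a..b, |x - a| ^ p = (b - a) ^ (p + 1) / (p + 1) := by
  rw [integral_comp_sub_right (fun x => |x| ^ p), sub_self,
    integral_abs_rpow_of_nonneg (sub_nonneg.2 hab) hp]

theorem integral_abs_sub_right_rpow {a b p : ℝ} (hab : a ≤ b) (hp : -1 < p) :
    ∫ x in a..b, |x - b| ^ p = (b - a) ^ (p + 1) / (p + 1) := by
  simp only [abs_sub_comm _ b]
  rw [integral_comp_sub_left (fun x => |x| ^ p), sub_self,
    integral_abs_rpow_of_nonneg (sub_nonneg.2 hab) hp]

theorem half_rpow_add_one (s : ℝ) : (1 / 2 : ℝ) ^ (s + 1) = 1 / (2 * 2 ^ s) := by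
  rw [div_rpow zero_le_one zero_le_two, one_rpow, rpow_add_one two_ne_zero, mul_comm]

theorem integral_sub_midpoint_mul_deriv {f f' : ℝ → ℝ} {a b : ℝ}
    (hf : ∀ x ∈ uIcc a b, HasDerivAt f (f' x) x) (hf' : IntervalIntegrable f' volume a b) :
    ∫ x in a..b, (x - (a + b) / 2) * f' x
      = (b - a) * ((f a + f b) / 2) - ∫ x in a..b, f x := by
  rw [integral_mul_deriv_eq_deriv_mul (u := fun x => x - (a + b) / 2) (u' := fun _ => 1)
    (fun x _ => (hasDerivAt_id x).sub_const _) hf intervalIntegrable_const hf']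
  simp only [one_mul]
  ring

theorem ContinuousOn.memLp_restrict_Ioc {f : ℝ → ℝ} {a b : ℝ} (hf : ContinuousOn f (Icc a b))
    (p : ENNReal) : MemLp f p (volume.restrict (Ioc a b)) := by
  obtain ⟨C, hC⟩ := isCompact_Icc.exists_bound_of_continuousOn hf
  exact MemLp.of_bound ((hf.mono Ioc_subset_Icc_self).aestronglyMeasurable measurableSet_Ioc) C
    (ae_restrict_of_forall_mem measurableSet_Ioc fun x hx => hC x (Ioc_subset_Icc_self hx))

theorem abs_intervalIntegral_mul_le_Lp_mul_Lq_s17 {f g : ℝ → ℝ} {a b p q : ℝ} (hab : a ≤ b)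
    (hpq : p.HolderConjugate q) (hf : ContinuousOn f (Icc a b)) (hg : ContinuousOn g (Icc a b)) :
    |∫ x in a..b, f x * g x|
      ≤ (∫ x in a..b, |f x| ^ p) ^ (1 / p) * (∫ x in a..b, |g x| ^ q) ^ (1 / q) := by
  simp only [integral_of_le hab]
  refine MeasureTheory.abs_integral_le_integral_abs.trans ?_
  simpa only [abs_mul, Real.norm_eq_abs] using
    integral_mul_norm_le_Lp_mul_Lq hpq (hf.memLp_restrict_Ioc _) (hg.memLp_restrict_Ioc _)

theorem Real.HolderConjugate.rpow_div_mul_rpow_eq {p r h Y : ℝ} (hpr : p.HolderConjugate r)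
    (hh : 0 < h) (hY : 0 ≤ Y) :
    (h ^ (p + 1) / (p + 1)) ^ (1 / p) * (h * Y) ^ (1 / r)
      = h ^ 2 * (1 / (p + 1)) ^ (1 / p) * Y ^ (1 / r) := by
  have hp := hpr.pos
  rw [div_eq_mul_one_div (h ^ (p + 1)), mul_rpow (by positivity) (by positivity),
    mul_rpow hh.le hY, ← rpow_mul hh.le, show (p + 1) * (1 / p) = 1 + 1 / p by field_simp]
  have hexp : h ^ (1 + 1 / p) * h ^ (1 / r) = h ^ 2 := by
    rw [← rpow_add hh, add_assoc, hpr.one_div_add_one_div, one_div_one]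
    norm_num
  linear_combination (1 / (p + 1)) ^ (1 / p) * Y ^ (1 / r) * hexp

theorem abs_integral_mul_le_of_integral_rpow_le {φ ψ : ℝ → ℝ} {a b p r h Y : ℝ}
    (hab : a ≤ b) (hpr : p.HolderConjugate r) (hφ : ContinuousOn φ (Icc a b))
    (hψ : ContinuousOn ψ (Icc a b)) (hh : 0 < h) (hY : 0 ≤ Y)
    (hφp : ∫ x in a..b, |φ x| ^ p = h ^ (p + 1) / (p + 1))
    (hψr : ∫ x in a..b, |ψ x| ^ r ≤ h * Y) :
    |∫ x in a..b, φ x * ψ x| ≤ h ^ 2 * (1 / (p + 1)) ^ (1 / p) * Y ^ (1 / r) := by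
  refine (abs_intervalIntegral_mul_le_Lp_mul_Lq_s17 hab hpr hφ hψ).trans ?_
  rw [hφp, ← hpr.rpow_div_mul_rpow_eq hh hY]
  exact mul_le_mul_of_nonneg_left
    (rpow_le_rpow (integral_nonneg hab fun x _ => by positivity) hψr hpr.symm.one_div_nonneg)
    (rpow_nonneg (div_nonneg (by positivity) (by linarith [hpr.pos])) _)

/-- `s`-convexity in the second sense (Breckner). -/
def SConvexOn (s : ℝ) (I : Set ℝ) (g : ℝ → ℝ) : Prop :=
  ∀ ⦃x⦄, x ∈ I → ∀ ⦃y⦄, y ∈ I → ∀ ⦃a b : ℝ⦄, 0 ≤ a → 0 ≤ b → a + b = 1 →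
    g (a * x + b * y) ≤ a ^ s * g x + b ^ s * g y

theorem ConvexOn.sConvexOn {s : ℝ} {I : Set ℝ} {g : ℝ → ℝ} (hg : ConvexOn ℝ I g)
    (hg0 : ∀ x ∈ I, 0 ≤ g x) (hs : s ≤ 1) : SConvexOn s I g := by
  intro x hx y hy a b ha hb hab
  calc g (a * x + b * y) ≤ a * g x + b * g y := hg.2 hx hy ha hb hab
    _ ≤ a ^ s * g x + b ^ s * g y := by
      gcongr
      · exact hg0 x hx
      · exact self_le_rpow_of_le_one ha (by linarith) hs
      · exact hg0 y hy
      · exact self_le_rpow_of_le_one hb (by linarith) hs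

namespace SConvexOn

variable {s a b : ℝ} {g : ℝ → ℝ}

theorem le_of_mem_Icc (hg : SConvexOn s (Icc a b) g) (hab : a < b) {x : ℝ} (hx : x ∈ Icc a b) :
    g x ≤ ((b - x) / (b - a)) ^ s * g a + ((x - a) / (b - a)) ^ s * g b := by
  have hD : 0 < b - a := sub_pos.2 hab
  have hcomb : (b - x) / (b - a) * a + (x - a) / (b - a) * b = x := by
    field_simp; ring
  have hsum : (b - x) / (b - a) + (x - a) / (b - a) = 1 := by
    field_simp; ring
  have key := hg (left_mem_Icc.2 hab.le) (right_mem_Icc.2 hab.le)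
    (div_nonneg (sub_nonneg.2 hx.2) hD.le) (div_nonneg (sub_nonneg.2 hx.1) hD.le) hsum
  rwa [hcomb] at key

theorem integral_le (hg : SConvexOn s (Icc a b) g) (hgc : ContinuousOn g (Icc a b))
    (hs : 0 ≤ s) (hab : a < b) {α β : ℝ} (haα : a ≤ α) (hαβ : α ≤ β) (hβb : β ≤ b) :
    ∫ x in α..β, g x
      ≤ (∫ x in α..β, ((b - x) / (b - a)) ^ s) * g a
        + (∫ x in α..β, ((x - a) / (b - a)) ^ s) * g b := by
  have hsub : Icc α β ⊆ Icc a b := Icc_subset_Icc haα hβb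
  have hw : ∀ (c : ℝ → ℝ) (y : ℝ), Continuous c →
      IntervalIntegrable (fun x => c x ^ s * y) volume α β :=
    fun c y hc =>
      (((continuous_rpow_const hs).comp hc).mul continuous_const).intervalIntegrable _ _
  rw [← intervalIntegral.integral_mul_const, ← intervalIntegral.integral_mul_const,
    ← integral_add (hw _ _ (by fun_prop)) (hw _ _ (by fun_prop))]
  exact integral_mono_on hαβ ((hgc.mono hsub).intervalIntegrable_of_Icc hαβ)
    ((hw _ _ (by fun_prop)).add (hw _ _ (by fun_prop))) fun x hx =>
      hg.le_of_mem_Icc hab (hsub hx)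

theorem integral_left_half_le (hg : SConvexOn s (Icc a b) g) (hgc : ContinuousOn g (Icc a b))
    (hs : 0 ≤ s) (hab : a < b) :
    ∫ x in a..(a + b) / 2, g x
      ≤ (b - a) / 2 * (((2 ^ (s + 1) - 1) * g a + g b) / (2 ^ s * (s + 1))) := by
  have hD : b - a ≠ 0 := (sub_pos.2 hab).ne'
  refine (hg.integral_le hgc hs hab le_rfl (by linarith) (by linarith)).trans_eq ?_
  rw [integral_rsub_div_rpow hD (by linarith), integral_sub_div_rpow hD (by linarith),
    div_self hD, sub_self, zero_div, show (b - (a + b) / 2) / (b - a) = 1 / 2 by field_simp; ring,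
    show ((a + b) / 2 - a) / (b - a) = 1 / 2 by field_simp; ring, one_rpow,
    zero_rpow (by linarith), half_rpow_add_one, rpow_add_one two_ne_zero]
  field_simp
  ring

theorem integral_right_half_le (hg : SConvexOn s (Icc a b) g) (hgc : ContinuousOn g (Icc a b))
    (hs : 0 ≤ s) (hab : a < b) :
    ∫ x in (a + b) / 2..b, g x
      ≤ (b - a) / 2 * ((g a + (2 ^ (s + 1) - 1) * g b) / (2 ^ s * (s + 1))) := by
  have hD : b - a ≠ 0 := (sub_pos.2 hab).ne'
  refine (hg.integral_le hgc hs hab (by linarith) (by linarith) le_rfl).trans_eq ?_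
  rw [integral_rsub_div_rpow hD (by linarith), integral_sub_div_rpow hD (by linarith),
    div_self hD, sub_self, zero_div, show (b - (a + b) / 2) / (b - a) = 1 / 2 by field_simp; ring,
    show ((a + b) / 2 - a) / (b - a) = 1 / 2 by field_simp; ring, one_rpow,
    zero_rpow (by linarith), half_rpow_add_one, rpow_add_one two_ne_zero]
  field_simp
  ring

end SConvexOn

theorem SConvexOn.abs_trapezoid_sub_average_le {f f' : ℝ → ℝ} {a b p r s : ℝ} (hab : a < b)
    (hf : ∀ x ∈ Icc a b, HasDerivAt f (f' x) x) (hf' : ContinuousOn f' (Icc a b))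
    (hpr : p.HolderConjugate r) (hs : 0 ≤ s)
    (hg : SConvexOn s (Icc a b) fun x => |f' x| ^ r) :
    |(f a + f b) / 2 - (∫ x in a..b, f x) / (b - a)|
      ≤ (b - a) / 4 * (1 / (p + 1)) ^ (1 / p) *
          ((((2 ^ (s + 1) - 1) * |f' a| ^ r + |f' b| ^ r) / (2 ^ s * (s + 1))) ^ (1 / r)
            + ((|f' a| ^ r + (2 ^ (s + 1) - 1) * |f' b| ^ r) / (2 ^ s * (s + 1))) ^ (1 / r)) := by
  set m := (a + b) / 2 with hm
  set h := (b - a) / 2 with hh_def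
  have hD : 0 < b - a := by linarith
  have hh : 0 < h := by linarith
  have hma : m - a = h := by rw [hm, hh_def]; ring
  have hbm : b - m = h := by rw [hm, hh_def]; ring
  have hp : -1 < p := by linarith [hpr.pos]
  have hT : 0 ≤ (2 : ℝ) ^ (s + 1) - 1 := sub_nonneg.2 (one_le_rpow one_le_two (by linarith))
  have hA : 0 ≤ |f' a| ^ r := by positivity
  have hB : 0 ≤ |f' b| ^ r := by positivity
  have hg_cont : ContinuousOn (fun x => |f' x| ^ r) (Icc a b) :=
    hf'.abs.rpow_const fun _ _ => Or.inr hpr.symm.nonneg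
  have hφ : ContinuousOn (fun x => x - m) (Icc a b) := by fun_prop
  have hsub_left : Icc a m ⊆ Icc a b := Icc_subset_Icc_right (by linarith)
  have hsub_right : Icc m b ⊆ Icc a b := Icc_subset_Icc_left (by linarith)
  have hleft := abs_integral_mul_le_of_integral_rpow_le (by linarith) hpr (hφ.mono hsub_left)
    (hf'.mono hsub_left) hh
    (div_nonneg (add_nonneg (mul_nonneg hT hA) hB) (by positivity))
    (by rw [integral_abs_sub_right_rpow (by linarith) hp, hma])
    (hg.integral_left_half_le hg_cont hs hab)
  have hright := abs_integral_mul_le_of_integral_rpow_le (by linarith) hpr (hφ.mono hsub_right)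
    (hf'.mono hsub_right) hh
    (div_nonneg (add_nonneg hA (mul_nonneg hT hB)) (by positivity))
    (by rw [integral_abs_sub_left_rpow (by linarith) hp, hbm])
    (hg.integral_right_half_le hg_cont hs hab)
  have hint : ∀ {c d}, c ∈ Icc a b → d ∈ Icc a b →
      IntervalIntegrable (fun x => (x - m) * f' x) volume c d := fun hc hd =>
    ((hφ.mul hf').mono (uIcc_subset_Icc hc hd)).intervalIntegrable
  have hidentity : (f a + f b) / 2 - (∫ x in a..b, f x) / (b - a)
      = ((∫ x in a..m, (x - m) * f' x) + ∫ x in m..b, (x - m) * f' x) / (b - a) := by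
    rw [integral_add_adjacent_intervals (hint ⟨le_rfl, hab.le⟩ ⟨by linarith, by linarith⟩)
      (hint ⟨by linarith, by linarith⟩ ⟨hab.le, le_rfl⟩),
      integral_sub_midpoint_mul_deriv (fun x hx => hf x (uIcc_of_le hab.le ▸ hx))
        (hf'.intervalIntegrable_of_Icc hab.le)]
    field_simp
  rw [hidentity, abs_div, abs_of_pos hD, div_le_iff₀ hD]
  calc _ ≤ _ := (abs_add_le _ _).trans (add_le_add hleft hright)
    _ = _ := by rw [hh_def]; ring

theorem convexOn_rpow_of_nonpos {c : ℝ} (hc : c ≤ 0) :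
    ConvexOn ℝ (Ioi 0) fun x : ℝ => x ^ c := by
  refine MonotoneOn.convexOn_of_deriv (convex_Ioi 0)
    (fun x hx => (continuousAt_rpow_const x c (Or.inl (ne_of_gt hx))).continuousWithinAt)
    (fun x hx => (differentiableAt_rpow_const_of_ne c
      (ne_of_gt (interior_subset hx : x ∈ Ioi 0))).differentiableWithinAt) ?_
  rw [interior_Ioi]
  intro x hx y hy hxy
  rw [deriv_rpow_const x c, deriv_rpow_const y c]
  exact mul_le_mul_of_nonpos_left (rpow_le_rpow_of_nonpos hx hxy (by linarith)) hc

theorem abs_mul_rpow_sub_one_rpow {s r x : ℝ} (hs : 0 ≤ s) (hx : 0 < x) :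
    |s * x ^ (s - 1)| ^ r = s ^ r * x ^ (r * (s - 1)) := by
  have hxs := rpow_nonneg hx.le (s - 1)
  rw [abs_of_nonneg (mul_nonneg hs hxs), mul_rpow hs hxs, ← rpow_mul hx.le, mul_comm (s - 1)]

theorem sConvexOn_abs_mul_rpow_sub_one_rpow {u v r s : ℝ} (hu : 0 < u) (hr : 0 ≤ r)
    (hs0 : 0 ≤ s) (hs1 : s ≤ 1) : SConvexOn s (Icc u v) fun x => |s * x ^ (s - 1)| ^ r := by
  have hpos : Icc u v ⊆ Ioi 0 := fun x hx => hu.trans_le hx.1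
  have hconv : ConvexOn ℝ (Icc u v) fun x => |s * x ^ (s - 1)| ^ r :=
    (((convexOn_rpow_of_nonpos (mul_nonpos_of_nonneg_of_nonpos hr (by linarith))).subset hpos
      (convex_Icc u v)).smul (rpow_nonneg hs0 r)).congr fun x hx =>
        (abs_mul_rpow_sub_one_rpow hs0 (hpos hx)).symm
  exact hconv.sConvexOn (fun x _ => by positivity) hs1

theorem abs_average_rpow_sub_logMean_le {u v p r s : ℝ} (hu : 0 < u) (huv : u < v)
    (hs0 : 0 ≤ s) (hs1 : s ≤ 1) (hpr : p.HolderConjugate r) :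
    |(u ^ s + v ^ s) / 2 - (v ^ (s + 1) - u ^ (s + 1)) / ((s + 1) * (v - u))|
      ≤ (v - u) / 4 * (1 / (p + 1)) ^ (1 / p) *
          ((((2 ^ (s + 1) - 1) * (s ^ r * u ^ (r * (s - 1))) + s ^ r * v ^ (r * (s - 1)))
              / (2 ^ s * (s + 1))) ^ (1 / r)
            + ((s ^ r * u ^ (r * (s - 1)) + (2 ^ (s + 1) - 1) * (s ^ r * v ^ (r * (s - 1))))
              / (2 ^ s * (s + 1))) ^ (1 / r)) := by
  have hpos : ∀ x ∈ Icc u v, 0 < x := fun x hx => hu.trans_le hx.1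
  have hconv := sConvexOn_abs_mul_rpow_sub_one_rpow (v := v) hu hpr.symm.nonneg hs0 hs1
  have key := hconv.abs_trapezoid_sub_average_le huv
    (fun x hx => hasDerivAt_rpow_const (Or.inl (hpos x hx).ne'))
    (continuousOn_const.mul (continuousOn_id.rpow_const fun x hx => Or.inl (hpos x hx).ne'))
    hpr hs0
  rwa [integral_rpow (Or.inl (by linarith)), div_div,
    abs_mul_rpow_sub_one_rpow hs0 hu, abs_mul_rpow_sub_one_rpow hs0 (hu.trans huv)] at key

theorem stmt_17_general (u v p r s : ℝ) (hu : 0 < u) (huv : u < v)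
    (hs : s ∈ Set.Ioc (0:ℝ) 1) (hp : 1 < p) (hpr : 1 / p + 1 / r = 1) :
    |(u ^ s + v ^ s) / 2 - (v ^ (s + 1) - u ^ (s + 1)) / ((s + 1) * (v - u))|
      ≤ ((v - u) / 4) * (1 / (p + 1)) ^ (1 / p) *
          ((s * (2 ^ (s + 1) - 1) * u ^ (r * (s - 1)) / (2 ^ s * (s + 1))
              + s * v ^ (r * (s - 1)) / (2 ^ s * (s + 1))) ^ (1 / r)
            + (s * u ^ (r * (s - 1)) / (2 ^ s * (s + 1))
              + s * (2 ^ (s + 1) - 1) * v ^ (r * (s - 1)) / (2 ^ s * (s + 1))) ^ (1 / r)) := by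
  obtain ⟨hs0, hs1⟩ := hs
  have hconj : p.HolderConjugate r :=
    holderConjugate_iff.2 ⟨hp, by simpa only [one_div] using hpr⟩
  refine (abs_average_rpow_sub_logMean_le hu huv hs0.le hs1 hconj).trans ?_
  have hsr : s ^ r ≤ s := rpow_le_self_of_le_one hs0.le hs1 hconj.symm.lt.le
  have hr := hconj.symm.one_div_nonneg
  have hT : 0 ≤ (2 : ℝ) ^ (s + 1) - 1 := sub_nonneg.2 (one_le_rpow one_le_two (by linarith))
  have hsr0 := rpow_nonneg hs0.le r
  have hu' := rpow_nonneg hu.le (r * (s - 1))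
  have hv' := rpow_nonneg (hu.trans huv).le (r * (s - 1))
  gcongr (v - u) / 4 * (1 / (p + 1)) ^ (1 / p) * (?_ + ?_)
  · refine rpow_le_rpow (div_nonneg (add_nonneg (mul_nonneg hT (mul_nonneg hsr0 hu'))
      (mul_nonneg hsr0 hv')) (by positivity)) ?_ hr
    rw [← add_div]
    gcongr ?_ / _
    linear_combination mul_le_mul_of_nonneg_right hsr (mul_nonneg hT hu')
      + mul_le_mul_of_nonneg_right hsr hv'
  · refine rpow_le_rpow (div_nonneg (add_nonneg (mul_nonneg hsr0 hu')
      (mul_nonneg hT (mul_nonneg hsr0 hv'))) (by positivity)) ?_ hr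
    rw [← add_div]
    gcongr ?_ / _
    linear_combination mul_le_mul_of_nonneg_right hsr hu'
      + mul_le_mul_of_nonneg_right hsr (mul_nonneg hT hv')

theorem stmt_17 (u v p r s : ℝ) (hu : 0 < u) (huv : u < v)
    (hs : s ∈ Set.Ioc (0:ℝ) 1) (hp : 1 < p) (hr : 1 < r) (hpr : 1 / p + 1 / r = 1) :
    |(u ^ s + v ^ s) / 2 - (v ^ (s + 1) - u ^ (s + 1)) / ((s + 1) * (v - u))|
      ≤ ((v - u) / 4) * (1 / (p + 1)) ^ (1 / p) *
          ((s * (2 ^ (s + 1) - 1) * u ^ (r * (s - 1)) / (2 ^ s * (s + 1))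
              + s * v ^ (r * (s - 1)) / (2 ^ s * (s + 1))) ^ (1 / r)
            + (s * u ^ (r * (s - 1)) / (2 ^ s * (s + 1))
              + s * (2 ^ (s + 1) - 1) * v ^ (r * (s - 1)) / (2 ^ s * (s + 1))) ^ (1 / r)) :=
  stmt_17_general u v p r s hu huv hs hp hpr
end
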